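/- Two-sided degree condition for player–player edges in a pairwise Nash equilibrium: if E results from a pairwise Nash equilibrium, then for any two distinct players i, j, (i, j) ∈ E implies deg_E(j) ≥ α_i and deg_E(i) ≥ α_j; and conversely, if (i, j) ∉ E and, after adding (i, j), deg(i) ≥ α_j, deg(j) ≥ α_i, and deg(i) + deg(j) > α_i + α_j, then E is not pairwise Nash stable. -/
import Mathlib


open Finset

variable {V : Type*} [Fintype V] [DecidableEq V]

/-- The neighbourhood of `i` in the edge set `E`. -/
def nbhd (E : Finset (Sym2 V)) (i : V) : Finset V :=
  Finset.univ.filter fun j => j ≠ i ∧ s(i, j) ∈ E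

/-- The degree of `v` in the edge set `E`. -/
def deg (E : Finset (Sym2 V)) (v : V) : ℕ :=
  (nbhd E v).card

/-- The utility of player `i` with visibility-aversion `α i` on edge set `E`:
the sum of the degrees of `i`'s neighbours minus `α i` times `i`'s own degree. -/
noncomputable def util (α : V → ℝ) (E : Finset (Sym2 V)) (i : V) : ℝ :=
  (∑ j ∈ nbhd E i, (deg E j : ℝ)) - α i * (deg E i : ℝ)

/-- All unordered pairs of distinct vertices within `C`. -/
def cliqueOn (C : Finset V) : Finset (Sym2 V) :=
  ((C ×ˢ C).filter fun p => p.1 ≠ p.2).image fun p => s(p.1, p.2)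

/-- A deviation of the edge set that the coalition `P` of players (among the player
set `N`) can achieve on its own: each added edge is either between two coalition
members (mutual consent), or unilaterally from a coalition member to a non-player,
or between two non-player neighbours of a coalition member; each removed edge is
incident to a coalition member, or is an edge between two non-player neighbours of
a coalition member (a connection that the member sustained). -/
def CoalDev (N P : Finset V) (E E' : Finset (Sym2 V)) : Prop :=
  (∀ e ∈ E' \ E,
      (∃ i ∈ P, ∃ j ∈ P, i ≠ j ∧ e = s(i, j)) ∨
      (∃ i ∈ P, ∃ j, j ∉ N ∧ j ≠ i ∧ e = s(i, j)) ∨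
      (∃ i ∈ P, ∃ j k : V, j ∉ N ∧ k ∉ N ∧ j ≠ k ∧
        s(i, j) ∈ E' ∧ s(i, k) ∈ E' ∧ e = s(j, k))) ∧
  (∀ e ∈ E \ E',
      (∃ i ∈ P, i ∈ e) ∨
      (∃ i ∈ P, ∃ j k : V, j ∉ N ∧ k ∉ N ∧ j ≠ k ∧
        s(i, j) ∈ E ∧ s(i, k) ∈ E ∧ e = s(j, k)))

/-- Nash stability: no single player has a strictly profitable unilateral deviation. -/
def NashStable (N : Finset V) (α : V → ℝ) (E : Finset (Sym2 V)) : Prop :=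
  ∀ i ∈ N, ∀ E' : Finset (Sym2 V), CoalDev N {i} E E' → util α E' i ≤ util α E i

/-- Pairwise stability: any two unconnected players such that connecting would strictly
benefit one must have the other strictly losing from the connection. -/
def PairStable (N : Finset V) (α : V → ℝ) (E : Finset (Sym2 V)) : Prop :=
  ∀ i ∈ N, ∀ j ∈ N, i ≠ j → s(i, j) ∉ E →
    util α E i < util α (E ∪ {s(i, j)}) i → util α (E ∪ {s(i, j)}) j < util α E j

/-- Pairwise Nash stability. -/
def PANS (N : Finset V) (α : V → ℝ) (E : Finset (Sym2 V)) : Prop :=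
  NashStable N α E ∧ PairStable N α E

/-- Strength: no coalition of players has a deviation making all its members weakly
better off and at least one strictly better off. -/
def Strong (N : Finset V) (α : V → ℝ) (E : Finset (Sym2 V)) : Prop :=
  ∀ P ⊆ N, ∀ E' : Finset (Sym2 V), CoalDev N P E E' →
    ¬ ((∀ i ∈ P, util α E i ≤ util α E' i) ∧ ∃ i ∈ P, util α E i < util α E' i)

/-- Social welfare: the total utility of the players. -/
noncomputable def sw (N : Finset V) (α : V → ℝ) (E : Finset (Sym2 V)) : ℝ :=
  ∑ i ∈ N, util α E i

lemma mem_nbhd' {E : Finset (Sym2 V)} {i j : V} :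
    j ∈ nbhd E i ↔ j ≠ i ∧ s(i, j) ∈ E := by simp [nbhd]

lemma nbhd_union_self {E : Finset (Sym2 V)} {i j : V} (h : i ≠ j) :
    nbhd (E ∪ {s(i, j)}) i = insert j (nbhd E i) := by
  ext k
  simp only [mem_nbhd', Finset.mem_union, Finset.mem_singleton, Finset.mem_insert,
    Sym2.eq_iff]
  aesop

lemma nbhd_union_other {E : Finset (Sym2 V)} {i j k : V} (hk : k ≠ i) (hk' : k ≠ j) :
    nbhd (E ∪ {s(i, j)}) k = nbhd E k := by
  ext l
  simp only [mem_nbhd', Finset.mem_union, Finset.mem_singleton, Sym2.eq_iff]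
  constructor
  · rintro ⟨hlk, hE | (⟨rfl, -⟩ | ⟨rfl, -⟩)⟩
    · exact ⟨hlk, hE⟩
    · exact absurd rfl hk
    · exact absurd rfl hk'
  · rintro ⟨hlk, hE⟩
    exact ⟨hlk, Or.inl hE⟩

lemma util_union (α : V → ℝ) (E : Finset (Sym2 V)) {i j : V} (h : i ≠ j)
    (hE : s(i, j) ∉ E) :
    util α (E ∪ {s(i, j)}) i
      = util α E i + (deg (E ∪ {s(i, j)}) j : ℝ) - α i := by
  have hj : j ∉ nbhd E i := by simp [mem_nbhd', hE]
  have h1 : deg (E ∪ {s(i, j)}) i = deg E i + 1 := by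
    rw [deg, nbhd_union_self h, Finset.card_insert_of_notMem hj, deg]
  have h2 : ∀ k ∈ nbhd E i, deg (E ∪ {s(i, j)}) k = deg E k := by
    intro k hk
    rw [mem_nbhd'] at hk
    have hkj : k ≠ j := by rintro rfl; exact hE hk.2
    rw [deg, nbhd_union_other hk.1 hkj, deg]
  unfold util
  rw [nbhd_union_self h, Finset.sum_insert hj, h1]
  rw [Finset.sum_congr rfl (fun k hk => by rw [h2 k hk])]
  push_cast
  ring

lemma pans_edge_deg {N : Finset V} {α : V → ℝ} {E : Finset (Sym2 V)}
    (hP : PANS N α E) {i j : V} (hi : i ∈ N) (hij : i ≠ j)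
    (hE : s(i, j) ∈ E) : α i ≤ (deg E j : ℝ) := by
  set E₀ := E.erase s(i, j) with hE₀
  have hdev : CoalDev N {i} E E₀ := by
    constructor
    · intro e he
      exfalso
      rw [Finset.mem_sdiff, hE₀, Finset.mem_erase] at he
      exact he.2 he.1.2
    · intro e he
      rw [Finset.mem_sdiff, hE₀, Finset.mem_erase, not_and] at he
      have : e = s(i, j) := by
        by_contra hne
        exact (he.2 hne) he.1
      left
      exact ⟨i, Finset.mem_singleton_self i, by rw [this]; exact Sym2.mem_mk_left i j⟩
  have hnash := hP.1 i hi E₀ hdev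
  have hnotin : s(i, j) ∉ E₀ := Finset.notMem_erase _ _
  have hrw : E₀ ∪ {s(i, j)} = E := by
    ext e
    simp only [Finset.mem_union, Finset.mem_singleton, hE₀, Finset.mem_erase]
    constructor
    · rintro (h' | rfl)
      exacts [h'.2, hE]
    · intro h'
      by_cases he : e = s(i, j)
      · exact Or.inr he
      · exact Or.inl ⟨he, h'⟩
  have := util_union α E₀ hij hnotin
  rw [hrw] at this
  linarith

/-- Two-sided degree conditions for player–player edges in pairwise Nash equilibria:
any existing player–player edge has both endpoint degrees at least the other's `α`;
conversely, a missing player–player edge whose addition would satisfy both degree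
thresholds, with at least one strict, contradicts pairwise Nash stability. -/
theorem player_edge_degree_conditions (N : Finset V) (α : V → ℝ)
    (hα : ∀ i ∈ N, 0 ≤ α i) :
    (∀ E : Finset (Sym2 V), PANS N α E →
      ∀ i ∈ N, ∀ j ∈ N, i ≠ j → s(i, j) ∈ E →
        α i ≤ (deg E j : ℝ) ∧ α j ≤ (deg E i : ℝ)) ∧
    (∀ E : Finset (Sym2 V), ∀ i ∈ N, ∀ j ∈ N, i ≠ j → s(i, j) ∉ E →
      α j ≤ (deg (E ∪ {s(i, j)}) i : ℝ) →
      α i ≤ (deg (E ∪ {s(i, j)}) j : ℝ) →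
      α i + α j <
        (deg (E ∪ {s(i, j)}) i : ℝ) + (deg (E ∪ {s(i, j)}) j : ℝ) →
      ¬ PANS N α E) := by
  constructor
  · intro E hP i hi j hj hij hE
    refine ⟨pans_edge_deg hP hi hij hE, pans_edge_deg hP hj hij.symm ?_⟩
    rwa [Sym2.eq_swap]
  · intro E i hi j hj hij hE h1 h2 hsum hP
    have hEji : s(j, i) ∉ E := by rwa [Sym2.eq_swap]
    have hset : E ∪ {s(j, i)} = E ∪ {s(i, j)} := by rw [Sym2.eq_swap]
    have hui := util_union α E hij hE
    have huj := util_union α E hij.symm hEji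
    rw [hset] at huj
    have hdegji : deg (E ∪ {s(j, i)}) i = deg (E ∪ {s(i, j)}) i := by rw [hset]
    by_cases hc : α i < (deg (E ∪ {s(i, j)}) j : ℝ)
    · have hgain : util α E i < util α (E ∪ {s(i, j)}) i := by linarith
      have := hP.2 i hi j hj hij hE hgain
      linarith
    · have hceq : α j < (deg (E ∪ {s(i, j)}) i : ℝ) := by
        push_neg at hc; linarith
      have hgain : util α E j < util α (E ∪ {s(j, i)}) j := by
        rw [hset]; linarith
      have := hP.2 j hj i hi hij.symm hEji hgain
      rw [hset] at this
      linarith
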